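/- arXiv:1611.06627 — 5 statements merged into one kernel-verified Lean document; each statement's English description precedes it below -/
import Mathlib

section
/- Let C be an N×M matrix and D an M×N matrix with integer entries, and set A = CD (an N×N matrix) and B = DC (an M×M matrix). Then left multiplication by the transposed matrix Cᵀ : ℤ^N → ℤ^M maps the subgroup (I−Aᵀ)ℤ^N into (I−Bᵀ)ℤ^M, and the induced group homomorphism Φ_{Cᵀ} : ℤ^N/(I−Aᵀ)ℤ^N → ℤ^M/(I−Bᵀ)ℤ^M is an isomorphism of abelian groups whose inverse is the homomorphism Φ_{Dᵀ} induced by left multiplication by Dᵀ. -/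
/-!
Since `Cᵀ (I - (CD)ᵀ) = (I - (DC)ᵀ) Cᵀ`, multiplication by `Cᵀ` descends to the quotients, and
likewise for `Dᵀ`. The composite `Dᵀ Cᵀ = (CD)ᵀ` acts as the identity on `ℤ^N / (I - (CD)ᵀ)ℤ^N`
because `v - (CD)ᵀ v` lies in the subgroup being factored out; symmetrically for `Cᵀ Dᵀ`.
-/

open Matrix

namespace Matrix

variable {R m n : Type*} [CommRing R] [Fintype m] [Fintype n] [DecidableEq m] [DecidableEq n]

/-- The subgroup `(I - Aᵀ)Rᵐ` whose quotient is the Bowen–Franks group of `A`. -/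
def bowenFranksRange (A : Matrix m m R) : AddSubgroup (m → R) :=
  AddMonoidHom.range (1 - Aᵀ).mulVecLin.toAddMonoidHom

theorem transpose_mul_one_sub_transpose_mul (P : Matrix m n R) (Q : Matrix n m R) :
    Pᵀ * (1 - (P * Q)ᵀ) = (1 - (Q * P)ᵀ) * Pᵀ := by
  simp only [Matrix.mul_sub, Matrix.sub_mul, transpose_mul, Matrix.mul_assoc, Matrix.mul_one,
    Matrix.one_mul]

theorem transpose_mulVec_mem_bowenFranksRange (P : Matrix m n R) (Q : Matrix n m R)
    {v : m → R} (hv : v ∈ bowenFranksRange (P * Q)) :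
    Pᵀ *ᵥ v ∈ bowenFranksRange (Q * P) := by
  obtain ⟨u, rfl⟩ := hv
  refine ⟨Pᵀ *ᵥ u, ?_⟩
  simp only [LinearMap.toAddMonoidHom_coe, mulVecLin_apply, mulVec_mulVec,
    transpose_mul_one_sub_transpose_mul]

theorem mk_transpose_mulVec_eq_mk (A : Matrix m m R) (v : m → R) :
    (QuotientAddGroup.mk (Aᵀ *ᵥ v) : (m → R) ⧸ bowenFranksRange A) = QuotientAddGroup.mk v := by
  refine QuotientAddGroup.eq.mpr ⟨v, ?_⟩
  simp only [LinearMap.toAddMonoidHom_coe, mulVecLin_apply, sub_mulVec, one_mulVec]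
  abel

def transposeMulVecQuotient (P : Matrix m n R) (Q : Matrix n m R) :
    (m → R) ⧸ bowenFranksRange (P * Q) →+ (n → R) ⧸ bowenFranksRange (Q * P) :=
  QuotientAddGroup.map _ _ Pᵀ.mulVecLin.toAddMonoidHom
    fun _ hv => transpose_mulVec_mem_bowenFranksRange P Q hv

@[simp]
theorem transposeMulVecQuotient_mk (P : Matrix m n R) (Q : Matrix n m R) (v : m → R) :
    transposeMulVecQuotient P Q (QuotientAddGroup.mk v) = QuotientAddGroup.mk (Pᵀ *ᵥ v) :=
  rfl

theorem transposeMulVecQuotient_comp (P : Matrix m n R) (Q : Matrix n m R) :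
    (transposeMulVecQuotient Q P).comp (transposeMulVecQuotient P Q) = AddMonoidHom.id _ := by
  refine QuotientAddGroup.addMonoidHom_ext _ (AddMonoidHom.ext fun v => ?_)
  simp only [AddMonoidHom.comp_apply, QuotientAddGroup.mk'_apply, transposeMulVecQuotient_mk,
    mulVec_mulVec, ← transpose_mul, mk_transpose_mulVec_eq_mk, AddMonoidHom.id_apply]

def transposeMulVecQuotientEquiv (P : Matrix m n R) (Q : Matrix n m R) :
    (m → R) ⧸ bowenFranksRange (P * Q) ≃+ (n → R) ⧸ bowenFranksRange (Q * P) :=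
  (transposeMulVecQuotient P Q).toAddEquiv (transposeMulVecQuotient Q P)
    (transposeMulVecQuotient_comp P Q) (transposeMulVecQuotient_comp Q P)

end Matrix

/-- Let `C` be an `N×M` matrix and `D` an `M×N` matrix with integer
entries, `A = CD`, `B = DC`.  Then left multiplication by `Cᵀ : ℤ^N → ℤ^M` maps the
subgroup `(I−Aᵀ)ℤ^N` into `(I−Bᵀ)ℤ^M`, and the induced homomorphism
`Φ_{Cᵀ} : ℤ^N/(I−Aᵀ)ℤ^N → ℤ^M/(I−Bᵀ)ℤ^M` is an isomorphism of abelian groups whose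
inverse is the homomorphism `Φ_{Dᵀ}` induced by left multiplication by `Dᵀ`. -/
theorem stmt_0 (N M : ℕ) (C : Matrix (Fin N) (Fin M) ℤ) (D : Matrix (Fin M) (Fin N) ℤ)
    (A : Matrix (Fin N) (Fin N) ℤ) (B : Matrix (Fin M) (Fin M) ℤ)
    (hA : A = C * D) (hB : B = D * C) :
    (∀ v ∈ AddMonoidHom.range (1 - Aᵀ).mulVecLin.toAddMonoidHom,
        Cᵀ.mulVec v ∈ AddMonoidHom.range (1 - Bᵀ).mulVecLin.toAddMonoidHom) ∧
    ∃ Φ : ((Fin N → ℤ) ⧸ AddMonoidHom.range (1 - Aᵀ).mulVecLin.toAddMonoidHom) ≃+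
          ((Fin M → ℤ) ⧸ AddMonoidHom.range (1 - Bᵀ).mulVecLin.toAddMonoidHom),
      (∀ v : Fin N → ℤ, Φ (QuotientAddGroup.mk v) = QuotientAddGroup.mk (Cᵀ.mulVec v)) ∧
      (∀ w : Fin M → ℤ, Φ.symm (QuotientAddGroup.mk w) = QuotientAddGroup.mk (Dᵀ.mulVec w)) := by
  subst hA hB
  exact ⟨fun _ => transpose_mulVec_mem_bowenFranksRange C D,
    transposeMulVecQuotientEquiv C D, fun _ => rfl, fun _ => rfl⟩
end

section
/- Let A = A_0, A_1, …, A_n = B be a sequence of square integer matrices, where A_i has size N_i with N_0 = N and N_n = M, such that for each i = 0, 1, …, n−1 there exist an N_i×N_{i+1} integer matrix C_{i+1} and an N_{i+1}×N_i integer matrix D_{i+1} with A_i = C_{i+1}D_{i+1} and A_{i+1} = D_{i+1}C_{i+1}. Then left multiplication by the transposed product matrix (C_1 C_2 ⋯ C_n)ᵀ : ℤ^N → ℤ^M maps (I−Aᵀ)ℤ^N into (I−Bᵀ)ℤ^M and induces a group isomorphism ℤ^N/(I−Aᵀ)ℤ^N → ℤ^M/(I−Bᵀ)ℤ^M whose inverse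 is induced by left multiplication by (D_n ⋯ D_2 D_1)ᵀ. -/
open Matrix

/-- The product `C₁ C₂ ⋯ Cₙ` of the connecting matrices of a strong shift equivalence. -/
def prodC (sz : ℕ → ℕ) (C : ∀ i, Matrix (Fin (sz i)) (Fin (sz (i + 1))) ℤ) :
    ∀ n, Matrix (Fin (sz 0)) (Fin (sz n)) ℤ
  | 0 => 1
  | n + 1 => prodC sz C n * C n

/-- The product `Dₙ ⋯ D₂ D₁` of the connecting matrices of a strong shift equivalence. -/
def prodD (sz : ℕ → ℕ) (D : ∀ i, Matrix (Fin (sz (i + 1))) (Fin (sz i)) ℤ) :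
    ∀ n, Matrix (Fin (sz n)) (Fin (sz 0)) ℤ
  | 0 => 1
  | n + 1 => D n * prodD sz D n

lemma step_equiv {m k : ℕ} (A : Matrix (Fin m) (Fin m) ℤ) (B : Matrix (Fin k) (Fin k) ℤ)
    (C : Matrix (Fin m) (Fin k) ℤ) (D : Matrix (Fin k) (Fin m) ℤ)
    (hA : A = C * D) (hB : B = D * C) :
    ∃ Φ : ((Fin m → ℤ) ⧸ AddMonoidHom.range (1 - Aᵀ).mulVecLin.toAddMonoidHom) ≃+
          ((Fin k → ℤ) ⧸ AddMonoidHom.range (1 - Bᵀ).mulVecLin.toAddMonoidHom),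
      (∀ v, Φ (QuotientAddGroup.mk v) = QuotientAddGroup.mk (Cᵀ.mulVec v)) ∧
      (∀ w, Φ.symm (QuotientAddGroup.mk w) = QuotientAddGroup.mk (Dᵀ.mulVec w)) := by
  set SA := AddMonoidHom.range (1 - Aᵀ).mulVecLin.toAddMonoidHom with hSA
  set SB := AddMonoidHom.range (1 - Bᵀ).mulVecLin.toAddMonoidHom with hSB
  have hCA : Cᵀ * (1 - Aᵀ) = (1 - Bᵀ) * Cᵀ := by
    subst hA hB
    simp [Matrix.mul_sub, Matrix.sub_mul, Matrix.transpose_mul, Matrix.mul_assoc]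
  have hDB : Dᵀ * (1 - Bᵀ) = (1 - Aᵀ) * Dᵀ := by
    subst hA hB
    simp [Matrix.mul_sub, Matrix.sub_mul, Matrix.transpose_mul, Matrix.mul_assoc]
  have hkerC : SA ≤ ((QuotientAddGroup.mk' SB).comp Cᵀ.mulVecLin.toAddMonoidHom).ker := by
    rintro v ⟨u, rfl⟩
    simp only [AddMonoidHom.mem_ker, AddMonoidHom.coe_comp, Function.comp_apply,
      LinearMap.toAddMonoidHom_coe, mulVecLin_apply, QuotientAddGroup.mk'_apply]
    rw [QuotientAddGroup.eq_zero_iff]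
    refine ⟨Cᵀ.mulVec u, ?_⟩
    simp only [LinearMap.toAddMonoidHom_coe, mulVecLin_apply, Matrix.mulVec_mulVec, hCA]
  have hkerD : SB ≤ ((QuotientAddGroup.mk' SA).comp Dᵀ.mulVecLin.toAddMonoidHom).ker := by
    rintro w ⟨u, rfl⟩
    simp only [AddMonoidHom.mem_ker, AddMonoidHom.coe_comp, Function.comp_apply,
      LinearMap.toAddMonoidHom_coe, mulVecLin_apply, QuotientAddGroup.mk'_apply]
    rw [QuotientAddGroup.eq_zero_iff]
    refine ⟨Dᵀ.mulVec u, ?_⟩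
    simp only [LinearMap.toAddMonoidHom_coe, mulVecLin_apply, Matrix.mulVec_mulVec, hDB]
  set f := QuotientAddGroup.lift SA ((QuotientAddGroup.mk' SB).comp Cᵀ.mulVecLin.toAddMonoidHom) hkerC with hf
  set g := QuotientAddGroup.lift SB ((QuotientAddGroup.mk' SA).comp Dᵀ.mulVecLin.toAddMonoidHom) hkerD with hg
  have hfmk : ∀ v, f (QuotientAddGroup.mk v) = QuotientAddGroup.mk (Cᵀ.mulVec v) := by
    intro v
    simp [hf, QuotientAddGroup.lift_mk, Matrix.mulVec_transpose]
  have hgmk : ∀ w, g (QuotientAddGroup.mk w) = QuotientAddGroup.mk (Dᵀ.mulVec w) := by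
    intro w
    simp [hg, QuotientAddGroup.lift_mk, Matrix.mulVec_transpose]
  have hgf : ∀ x, g (f x) = x := by
    intro x
    refine QuotientAddGroup.induction_on x fun v => ?_
    rw [hfmk, hgmk, Matrix.mulVec_mulVec, QuotientAddGroup.eq]
    refine ⟨v, ?_⟩
    have h : Dᵀ * Cᵀ = Aᵀ := by rw [← Matrix.transpose_mul, ← hA]
    simp only [LinearMap.toAddMonoidHom_coe, mulVecLin_apply, h, Matrix.sub_mulVec,
      Matrix.one_mulVec]
    abel
  have hfg : ∀ x, f (g x) = x := by
    intro x
    refine QuotientAddGroup.induction_on x fun w => ?_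
    rw [hgmk, hfmk, Matrix.mulVec_mulVec, QuotientAddGroup.eq]
    refine ⟨w, ?_⟩
    have h : Cᵀ * Dᵀ = Bᵀ := by rw [← Matrix.transpose_mul, ← hB]
    simp only [LinearMap.toAddMonoidHom_coe, mulVecLin_apply, h, Matrix.sub_mulVec,
      Matrix.one_mulVec]
    abel
  exact ⟨{ toFun := f, invFun := g, left_inv := hgf, right_inv := hfg, map_add' := f.map_add },
    hfmk, hgmk⟩

lemma sse_aux (sz : ℕ → ℕ)
    (A : ∀ i, Matrix (Fin (sz i)) (Fin (sz i)) ℤ)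
    (C : ∀ i, Matrix (Fin (sz i)) (Fin (sz (i + 1))) ℤ)
    (D : ∀ i, Matrix (Fin (sz (i + 1))) (Fin (sz i)) ℤ) :
    ∀ n, (∀ i < n, A i = C i * D i) → (∀ i < n, A (i + 1) = D i * C i) →
    ∃ Φ : ((Fin (sz 0) → ℤ) ⧸ AddMonoidHom.range (1 - (A 0)ᵀ).mulVecLin.toAddMonoidHom) ≃+
          ((Fin (sz n) → ℤ) ⧸ AddMonoidHom.range (1 - (A n)ᵀ).mulVecLin.toAddMonoidHom),
      (∀ v : Fin (sz 0) → ℤ,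
          Φ (QuotientAddGroup.mk v) = QuotientAddGroup.mk ((prodC sz C n)ᵀ.mulVec v)) ∧
      (∀ w : Fin (sz n) → ℤ,
          Φ.symm (QuotientAddGroup.mk w) = QuotientAddGroup.mk ((prodD sz D n)ᵀ.mulVec w)) := by
  intro n
  induction n with
  | zero =>
    intro _ _
    exact ⟨AddEquiv.refl _, fun v => by simp [prodC], fun w => by simp [prodD]⟩
  | succ n ih =>
    intro hCD hDC
    obtain ⟨Φn, h1, h2⟩ := ih (fun i hi => hCD i (hi.trans (Nat.lt_succ_self n)))
      (fun i hi => hDC i (hi.trans (Nat.lt_succ_self n)))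
    obtain ⟨Ψ, h3, h4⟩ := step_equiv (A n) (A (n + 1)) (C n) (D n)
      (hCD n (Nat.lt_succ_self n)) (hDC n (Nat.lt_succ_self n))
    refine ⟨Φn.trans Ψ, fun v => ?_, fun w => ?_⟩
    · simp only [AddEquiv.trans_apply, h1, h3, Matrix.mulVec_mulVec]
      rw [show prodC sz C (n + 1) = prodC sz C n * C n from rfl, Matrix.transpose_mul]
    · simp only [AddEquiv.symm_trans_apply, h4, h2, Matrix.mulVec_mulVec]
      rw [show prodD sz D (n + 1) = D n * prodD sz D n from rfl, Matrix.transpose_mul]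

/-- Let `A = A_0, A_1, …, A_n = B` be a chain of square integer matrices
with `A_i = C_{i+1} D_{i+1}` and `A_{i+1} = D_{i+1} C_{i+1}` (a strong shift equivalence in
`n` steps).  Then left multiplication by `(C₁C₂⋯Cₙ)ᵀ : ℤ^N → ℤ^M` maps `(I−Aᵀ)ℤ^N` into
`(I−Bᵀ)ℤ^M` and induces a group isomorphism
`ℤ^N/(I−Aᵀ)ℤ^N → ℤ^M/(I−Bᵀ)ℤ^M` whose inverse is induced by left multiplication by
`(Dₙ⋯D₂D₁)ᵀ`. -/
theorem stmt_1 (n : ℕ) (sz : ℕ → ℕ)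
    (A : ∀ i, Matrix (Fin (sz i)) (Fin (sz i)) ℤ)
    (C : ∀ i, Matrix (Fin (sz i)) (Fin (sz (i + 1))) ℤ)
    (D : ∀ i, Matrix (Fin (sz (i + 1))) (Fin (sz i)) ℤ)
    (hCD : ∀ i < n, A i = C i * D i)
    (hDC : ∀ i < n, A (i + 1) = D i * C i) :
    (∀ v ∈ AddMonoidHom.range (1 - (A 0)ᵀ).mulVecLin.toAddMonoidHom,
        (prodC sz C n)ᵀ.mulVec v ∈
          AddMonoidHom.range (1 - (A n)ᵀ).mulVecLin.toAddMonoidHom) ∧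
    ∃ Φ : ((Fin (sz 0) → ℤ) ⧸ AddMonoidHom.range (1 - (A 0)ᵀ).mulVecLin.toAddMonoidHom) ≃+
          ((Fin (sz n) → ℤ) ⧸ AddMonoidHom.range (1 - (A n)ᵀ).mulVecLin.toAddMonoidHom),
      (∀ v : Fin (sz 0) → ℤ,
          Φ (QuotientAddGroup.mk v) = QuotientAddGroup.mk ((prodC sz C n)ᵀ.mulVec v)) ∧
      (∀ w : Fin (sz n) → ℤ,
          Φ.symm (QuotientAddGroup.mk w) = QuotientAddGroup.mk ((prodD sz D n)ᵀ.mulVec w)) := by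
  obtain ⟨Φ, h1, h2⟩ := sse_aux sz A C D n hCD hDC
  refine ⟨fun v hv => ?_, Φ, h1, h2⟩
  rw [← QuotientAddGroup.eq_zero_iff, ← h1, QuotientAddGroup.eq_zero_iff _ |>.mpr hv,
    map_zero]
end

section
/- Let C be an N×M and D an M×N matrix with nonnegative integer entries, and set A = CD, B = DC. Then the matrix identity A^G · D̂ = D̂ · B^G holds, where A^G and B^G are the edge transition matrices of A and B realized on the pair edge sets E_A and E_B. Consequently, left multiplication by D̂ᵀ maps the subgroup (I−(A^G)ᵀ)ℤ^{E_A} into (I−(B^G)ᵀ)ℤ^{E_B}, and hence induces a group homomorphism Φ_{D̂ᵀ} : ℤ^{E_A}/(I−(A^G)ᵀ)ℤ^{E_A} → ℤ^{E_B}/(I−(B^G)ᵀ)ℤ^{E_B}. -/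
open Matrix

/-- The edge set of the directed graph of a rectangular matrix `C` with nonnegative integer
entries: there are `C i j` edges from vertex `i` to vertex `j`. -/
def Edge {N M : ℕ} (C : Matrix (Fin N) (Fin M) ℕ) : Type :=
  Σ i : Fin N, Σ j : Fin M, Fin (C i j)

instance {N M : ℕ} (C : Matrix (Fin N) (Fin M) ℕ) : Fintype (Edge C) := by
  unfold Edge; have : ∀ i, Fintype (Σ j : Fin M, Fin (C i j)) := fun _ => inferInstance
  infer_instance

instance {N M : ℕ} (C : Matrix (Fin N) (Fin M) ℕ) : DecidableEq (Edge C) := by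
  unfold Edge; infer_instance

def Edge.src {N M : ℕ} {C : Matrix (Fin N) (Fin M) ℕ} (e : Edge C) : Fin N := e.1

def Edge.tar {N M : ℕ} {C : Matrix (Fin N) (Fin M) ℕ} (e : Edge C) : Fin M := e.2.1

/-- The edge set of `A = CD`, realized as composable pairs `(c, d)` of edges of `C` and `D`. -/
def PairEdgeA {N M : ℕ} (C : Matrix (Fin N) (Fin M) ℕ) (D : Matrix (Fin M) (Fin N) ℕ) :
    Type :=
  {p : Edge C × Edge D // p.1.tar = p.2.src}

/-- The edge set of `B = DC`, realized as composable pairs `(d, c)` of edges of `D` and `C`. -/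
def PairEdgeB {N M : ℕ} (C : Matrix (Fin N) (Fin M) ℕ) (D : Matrix (Fin M) (Fin N) ℕ) :
    Type :=
  {p : Edge D × Edge C // p.1.tar = p.2.src}

instance {N M : ℕ} (C : Matrix (Fin N) (Fin M) ℕ) (D : Matrix (Fin M) (Fin N) ℕ) :
    Fintype (PairEdgeA C D) := by unfold PairEdgeA; infer_instance

instance {N M : ℕ} (C : Matrix (Fin N) (Fin M) ℕ) (D : Matrix (Fin M) (Fin N) ℕ) :
    Fintype (PairEdgeB C D) := by unfold PairEdgeB; infer_instance

instance {N M : ℕ} (C : Matrix (Fin N) (Fin M) ℕ) (D : Matrix (Fin M) (Fin N) ℕ) :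
    DecidableEq (PairEdgeA C D) := by unfold PairEdgeA; infer_instance

instance {N M : ℕ} (C : Matrix (Fin N) (Fin M) ℕ) (D : Matrix (Fin M) (Fin N) ℕ) :
    DecidableEq (PairEdgeB C D) := by unfold PairEdgeB; infer_instance

namespace Matrix

variable {R k l m n : Type*} [CommRing R] [Fintype k] [Fintype l] [Fintype n]

theorem mulVec_mem_range_of_mul_eq {Q : Matrix m n R} {S : Matrix n k R} {T : Matrix m l R}
    {Q' : Matrix l k R} (h : Q * S = T * Q') :
    ∀ v ∈ AddMonoidHom.range S.mulVecLin.toAddMonoidHom,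
      Q *ᵥ v ∈ AddMonoidHom.range T.mulVecLin.toAddMonoidHom := by
  rintro v ⟨w, rfl⟩
  refine ⟨Q' *ᵥ w, ?_⟩
  simp only [LinearMap.toAddMonoidHom_coe, mulVecLin_apply, mulVec_mulVec, h]

theorem transpose_mul_one_sub_transpose_of_mul_eq [Fintype m] [DecidableEq m] [DecidableEq n]
    {X : Matrix m m R} {P : Matrix m n R} {Y : Matrix n n R} (h : X * P = P * Y) :
    Pᵀ * (1 - Xᵀ) = (1 - Yᵀ) * Pᵀ := by
  rw [Matrix.mul_sub, Matrix.sub_mul, Matrix.mul_one, Matrix.one_mul, ← transpose_mul,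
    ← transpose_mul, h]

end Matrix

section PairEdge

variable {N M : ℕ} (C : Matrix (Fin N) (Fin M) ℕ) (D : Matrix (Fin M) (Fin N) ℕ)

def PairEdgeA.transition : Matrix (PairEdgeA C D) (PairEdgeA C D) ℤ :=
  Matrix.of fun a a' => if a.val.2.tar = a'.val.1.src then 1 else 0

def PairEdgeB.transition : Matrix (PairEdgeB C D) (PairEdgeB C D) ℤ :=
  Matrix.of fun b b' => if b.val.2.tar = b'.val.1.src then 1 else 0

def pairEdgeDHat : Matrix (PairEdgeA C D) (PairEdgeB C D) ℤ :=
  Matrix.of fun a b => if a.val.2 = b.val.1 then 1 else 0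

variable {C D}

/-- Both sides of `A^G D̂ = D̂ B^G` at `(a, b)` count the edges `c` of `C` from `t(d_a)` to
`s(d_b)`: a middle edge `(c, d_b)` of `E_A` corresponds to the middle edge `(d_a, c)` of `E_B`. -/
def PairEdgeA.transitionDHatEquiv (a : PairEdgeA C D) (b : PairEdgeB C D) :
    {a' : PairEdgeA C D // a.val.2.tar = a'.val.1.src ∧ a'.val.2 = b.val.1} ≃
      {b' : PairEdgeB C D // a.val.2 = b'.val.1 ∧ b'.val.2.tar = b.val.1.src} where
  toFun a' := ⟨⟨(a.val.2, a'.val.val.1), a'.2.1⟩, rfl, by rw [a'.val.2, a'.2.2]⟩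
  invFun b' :=
    ⟨⟨(b'.val.val.2, b.val.1), b'.2.2⟩, (congrArg Edge.tar b'.2.1).trans b'.val.2, rfl⟩
  left_inv a' := Subtype.ext <| Subtype.ext <| Prod.ext rfl a'.2.2.symm
  right_inv b' := Subtype.ext <| Subtype.ext <| Prod.ext b'.2.1 rfl

variable (C D)

theorem PairEdgeA.transition_mul_pairEdgeDHat :
    PairEdgeA.transition C D * pairEdgeDHat C D = pairEdgeDHat C D * PairEdgeB.transition C D := by
  ext a b
  simp only [PairEdgeA.transition, PairEdgeB.transition, pairEdgeDHat, Matrix.mul_apply,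
    Matrix.of_apply, ite_zero_mul_ite_zero, one_mul, Finset.sum_boole, ← Fintype.card_subtype]
  exact congrArg _ (Fintype.card_congr (PairEdgeA.transitionDHatEquiv a b))

end PairEdge

/-- Let `C`, `D` be rectangular nonnegative integer matrices, `A = CD`,
`B = DC`.  Then `A^G · D̂ = D̂ · B^G`, where `A^G`, `B^G` are the edge transition matrices of
`A` and `B` realized on the pair edge sets, and consequently left multiplication by `D̂ᵀ`
maps `(I−(A^G)ᵀ)ℤ^{E_A}` into `(I−(B^G)ᵀ)ℤ^{E_B}` and induces a group homomorphism of the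
quotient groups. -/
theorem stmt_4 (N M : ℕ) (C : Matrix (Fin N) (Fin M) ℕ) (D : Matrix (Fin M) (Fin N) ℕ) :
    let AG : Matrix (PairEdgeA C D) (PairEdgeA C D) ℤ :=
      Matrix.of fun a a' => if a.val.2.tar = a'.val.1.src then 1 else 0
    let BG : Matrix (PairEdgeB C D) (PairEdgeB C D) ℤ :=
      Matrix.of fun b b' => if b.val.2.tar = b'.val.1.src then 1 else 0
    let Dhat : Matrix (PairEdgeA C D) (PairEdgeB C D) ℤ :=
      Matrix.of fun a b => if a.val.2 = b.val.1 then 1 else 0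
    AG * Dhat = Dhat * BG ∧
    (∀ v ∈ AddMonoidHom.range (1 - AGᵀ).mulVecLin.toAddMonoidHom,
        Dhatᵀ.mulVec v ∈ AddMonoidHom.range (1 - BGᵀ).mulVecLin.toAddMonoidHom) ∧
    ∃ Φ : ((PairEdgeA C D → ℤ) ⧸ AddMonoidHom.range (1 - AGᵀ).mulVecLin.toAddMonoidHom) →+
          ((PairEdgeB C D → ℤ) ⧸ AddMonoidHom.range (1 - BGᵀ).mulVecLin.toAddMonoidHom),
      ∀ v : PairEdgeA C D → ℤ,
        Φ (QuotientAddGroup.mk v) = QuotientAddGroup.mk (Dhatᵀ.mulVec v) := by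
  intro AG BG Dhat
  have hcomm : AG * Dhat = Dhat * BG := PairEdgeA.transition_mul_pairEdgeDHat C D
  have hmap := Matrix.mulVec_mem_range_of_mul_eq
    (Matrix.transpose_mul_one_sub_transpose_of_mul_eq hcomm)
  exact ⟨hcomm, hmap, QuotientAddGroup.map _ _ Dhatᵀ.mulVecLin.toAddMonoidHom hmap, fun _ => rfl⟩
end

section
/- Let G = (V,E) be a finite directed graph with transition matrix A, and let p be a partition of the out-edge sets of G with out-split graph G^{[P]} and transition matrix A^{[P]}. Then the matrices C^{[P]} and D^{[P]} satisfy C^{[P]} D^{[P]} = A and D^{[P]} C^{[P]} = A^{[P]}. In particular, the transition matrix of a graph and the transition matrix of any of its out-split graphs are elementary equivalent. -/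
open Matrix

/-- Let `G = (V,E)` be a finite directed graph with transition matrix `A`,
and let `p` be a partition of the out-edge sets of `G` with out-split graph `G^{[P]}` and
transition matrix `A^{[P]}`.  Then `C^{[P]} D^{[P]} = A` and `D^{[P]} C^{[P]} = A^{[P]}`.
In particular, the transition matrix of a graph and the transition matrix of any of its
out-split graphs are elementary equivalent. -/
theorem stmt_8 (V E : Type) [Fintype V] [Fintype E] [DecidableEq V] [DecidableEq E]
    (s t : E → V) (m : V → ℕ) (hm : ∀ I, 1 ≤ m I)
    (p : E → ℕ) (hp : ∀ e, p e < m (s e)) :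
    let A : Matrix V V ℕ := Matrix.of fun I J => Fintype.card {e : E // s e = I ∧ t e = J}
    -- the vertices `(I, n)`, `n < m(I)`, of the out-split graph
    let V' := Σ I : V, Fin (m I)
    -- the edges `(e, k)`, `k < m(t(e))`, of the out-split graph
    let E' := Σ e : E, Fin (m (t e))
    let s' : E' → V' := fun ε => ⟨s ε.1, ⟨p ε.1, hp ε.1⟩⟩
    let t' : E' → V' := fun ε => ⟨t ε.1, ε.2⟩
    let A' : Matrix V' V' ℕ :=
      Matrix.of fun v w => Fintype.card {ε : E' // s' ε = v ∧ t' ε = w}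
    let CP : Matrix V V' ℕ := Matrix.of fun I v => if I = v.1 then 1 else 0
    let DP : Matrix V' V ℕ :=
      Matrix.of fun v J => Fintype.card {e : E // s e = v.1 ∧ p e = v.2.val ∧ t e = J}
    CP * DP = A ∧ DP * CP = A' ∧
      ∃ (C : Matrix V V' ℕ) (D : Matrix V' V ℕ), A = C * D ∧ A' = D * C := by
  intro A V' E' s' t' A' CP DP
  have h1 : CP * DP = A := by
    ext I J
    simp only [Matrix.mul_apply, Matrix.of_apply, CP, DP, A, ite_mul, one_mul, zero_mul]
    rw [← Finset.univ_sigma_univ, Finset.sum_sigma]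
    have step : ∀ x : V, (∑ x1 : Fin (m x),
        if I = x then Fintype.card {e : E // s e = x ∧ p e = (x1 : ℕ) ∧ t e = J} else 0)
        = if I = x then
            (∑ x1 : Fin (m x), Fintype.card {e : E // s e = x ∧ p e = (x1 : ℕ) ∧ t e = J})
          else 0 := by
      intro x; split <;> simp
    simp only [step]
    rw [Finset.sum_ite_eq, if_pos (Finset.mem_univ I)]
    rw [show (∑ n : Fin (m I), Fintype.card {e : E // s e = I ∧ p e = (n : ℕ) ∧ t e = J})
        = Fintype.card (Σ n : Fin (m I), {e : E // s e = I ∧ p e = (n : ℕ) ∧ t e = J}) from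
        Fintype.card_sigma.symm]
    refine (Fintype.card_congr ?_).symm
    exact { toFun := fun x => ⟨⟨p x.1, congrArg m x.2.1 ▸ hp x.1⟩, x.1, x.2.1, rfl, x.2.2⟩
            invFun := fun x => ⟨x.2.1, x.2.2.1, x.2.2.2.2⟩
            left_inv := by rintro ⟨e, hs, ht⟩; rfl
            right_inv := by
              rintro ⟨n, e, hs, hpe, ht⟩
              have hn : (⟨p e, congrArg m hs ▸ hp e⟩ : Fin (m I)) = n := Fin.ext hpe
              subst hn
              rfl }
  have h2 : DP * CP = A' := by
    ext ⟨I, n⟩ ⟨J, k⟩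
    simp only [Matrix.mul_apply, Matrix.of_apply, CP, DP, A', mul_ite, mul_one, mul_zero]
    rw [Finset.sum_ite_eq' Finset.univ (J : V)]
    simp only [Finset.mem_univ, if_true]
    refine Fintype.card_congr (Equiv.symm ?_)
    show {ε : Σ e : E, Fin (m (t e)) //
        s' ε = (⟨I, n⟩ : Σ I, Fin (m I)) ∧ t' ε = ⟨J, k⟩} ≃
      {e : E // s e = I ∧ p e = (n : ℕ) ∧ t e = J}
    refine { toFun := fun x => ⟨x.1.1, ?_⟩
             invFun := fun x => ⟨⟨x.1, Fin.cast (congrArg m x.2.2.2.symm) k⟩, ?_, ?_⟩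
             left_inv := ?_
             right_inv := ?_ }
    · obtain ⟨⟨e, k'⟩, hx1, hx2⟩ := x
      have hs : s e = I := congrArg Sigma.fst hx1
      have ht : t e = J := congrArg Sigma.fst hx2
      subst hs
      exact ⟨rfl, congrArg Fin.val (eq_of_heq (Sigma.mk.inj_iff.mp hx1).2), ht⟩
    · obtain ⟨e, hs, hpe, ht⟩ := x
      show (⟨s e, ⟨p e, hp e⟩⟩ : Σ I, Fin (m I)) = ⟨I, n⟩
      subst hs
      exact congrArg (Sigma.mk (s e)) (Fin.ext hpe)
    · obtain ⟨e, hs, hpe, ht⟩ := x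
      show (⟨t e, Fin.cast (congrArg m ht.symm) k⟩ : Σ I, Fin (m I)) = ⟨J, k⟩
      subst ht
      exact congrArg (Sigma.mk (t e)) (Fin.ext rfl)
    · rintro ⟨⟨e, k'⟩, hx1, hx2⟩
      apply Subtype.ext
      have ht : t e = J := congrArg Sigma.fst hx2
      subst ht
      have hk : k' = k := eq_of_heq (Sigma.mk.inj_iff.mp hx2).2
      subst hk
      exact congrArg (Sigma.mk e) (Fin.ext rfl)
    · rintro ⟨e, hs, hpe, ht⟩
      exact Subtype.ext rfl
  exact ⟨h1, h2, CP, DP, h1.symm, h2.symm⟩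
end

section
/- Let G = (V,E) be a finite directed graph with transition matrix A, and let q be a partition of the in-edge sets of G with in-split graph G_{[P]} and transition matrix A_{[P]}. Then the matrices C_{[P]} and D_{[P]} satisfy C_{[P]} D_{[P]} = A and D_{[P]} C_{[P]} = A_{[P]}. In particular, the transition matrix of a graph and the transition matrix of any of its in-split graphs are elementary equivalent. -/
open Matrix

lemma card_split {V E : Type} [Fintype E] [DecidableEq V]
    (s t : E → V) (m : V → ℕ) (q : E → ℕ)
    (hq : ∀ e, q e < m (t e)) (I J : V) :
    ∑ j : Fin (m J), Fintype.card {e : E // s e = I ∧ t e = J ∧ q e = j.val}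
      = Fintype.card {e : E // s e = I ∧ t e = J} := by
  rw [← Fintype.card_sigma]
  apply Fintype.card_congr
  refine
    { toFun := fun x => ⟨x.2.1, x.2.2.1, x.2.2.2.1⟩
      invFun := fun e => ⟨⟨q e.1, lt_of_lt_of_le (hq e.1) (le_of_eq (congrArg m e.2.2))⟩, e.1, e.2.1, e.2.2, rfl⟩
      left_inv := ?_
      right_inv := fun e => rfl }
  rintro ⟨⟨jv, hjv⟩, e, h1, h2, h3⟩
  simp only [Fin.val_mk] at h3
  subst h3
  rfl

lemma card_split2 {V E : Type} [Fintype E] [DecidableEq V]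
    (s t : E → V) (m : V → ℕ) (q : E → ℕ)
    (hq : ∀ e, q e < m (t e)) (J K : V) (j : Fin (m J)) (k : Fin (m K)) :
    Fintype.card {ε : Σ e : E, Fin (m (s e)) //
        (⟨s ε.1, ε.2⟩ : Σ J : V, Fin (m J)) = ⟨J, j⟩ ∧
        (⟨t ε.1, ⟨q ε.1, hq ε.1⟩⟩ : Σ J : V, Fin (m J)) = ⟨K, k⟩}
      = Fintype.card {e : E // s e = J ∧ t e = K ∧ q e = k.val} := by
  apply Fintype.card_congr
  refine
    { toFun := fun x => ⟨x.1.1, ?_, ?_, ?_⟩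
      invFun := fun e => ⟨⟨e.1, ⟨j.val, lt_of_lt_of_le j.isLt (le_of_eq (congrArg m e.2.1.symm))⟩⟩, ?_, ?_⟩
      left_inv := ?_
      right_inv := ?_ }
  · exact congrArg Sigma.fst x.2.1
  · exact congrArg Sigma.fst x.2.2
  · have h := x.2.2
    have h1 : t x.1.1 = K := congrArg Sigma.fst h
    rcases x with ⟨⟨e, i⟩, ha, hb⟩
    simp only at h1
    subst h1
    have := (Sigma.mk.inj_iff.mp hb).2
    have : (⟨q e, hq e⟩ : Fin (m (t e))) = k := eq_of_heq this
    exact congrArg Fin.val this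
  · rcases e with ⟨e, h1, h2, h3⟩
    simp only
    subst h1
    rfl
  · rcases e with ⟨e, h1, h2, h3⟩
    simp only
    subst h2
    exact Sigma.ext rfl (heq_of_eq (Fin.ext h3))
  · rintro ⟨⟨e, i⟩, ha, hb⟩
    have h1 : s e = J := congrArg Sigma.fst ha
    apply Subtype.ext
    simp only
    refine Sigma.ext rfl (heq_of_eq (Fin.ext ?_))
    simp only
    subst h1
    have := (Sigma.mk.inj_iff.mp ha).2
    exact (congrArg Fin.val (eq_of_heq this)).symm
  · rintro ⟨e, h1, h2, h3⟩
    rfl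

/-- Let `G = (V,E)` be a finite directed graph with transition matrix `A`,
and let `q` be a partition of the in-edge sets of `G` with in-split graph `G_{[P]}` and
transition matrix `A_{[P]}`.  Then `C_{[P]} D_{[P]} = A` and `D_{[P]} C_{[P]} = A_{[P]}`.
In particular, the transition matrix of a graph and the transition matrix of any of its
in-split graphs are elementary equivalent. -/
theorem stmt_9 (V E : Type) [Fintype V] [Fintype E] [DecidableEq V] [DecidableEq E]
    (s t : E → V) (m : V → ℕ) (hm : ∀ J, 1 ≤ m J)
    (q : E → ℕ) (hq : ∀ e, q e < m (t e)) :
    let A : Matrix V V ℕ := Matrix.of fun I J => Fintype.card {e : E // s e = I ∧ t e = J}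
    -- the vertices `(J, n)`, `n < m(J)`, of the in-split graph
    let V' := Σ J : V, Fin (m J)
    -- the edges `(e, i)`, `i < m(s(e))`, of the in-split graph
    let E' := Σ e : E, Fin (m (s e))
    let s' : E' → V' := fun ε => ⟨s ε.1, ε.2⟩
    let t' : E' → V' := fun ε => ⟨t ε.1, ⟨q ε.1, hq ε.1⟩⟩
    let A' : Matrix V' V' ℕ :=
      Matrix.of fun v w => Fintype.card {ε : E' // s' ε = v ∧ t' ε = w}
    let CP : Matrix V V' ℕ :=
      Matrix.of fun I w => Fintype.card {e : E // s e = I ∧ t e = w.1 ∧ q e = w.2.val}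
    let DP : Matrix V' V ℕ := Matrix.of fun v K => if v.1 = K then 1 else 0
    CP * DP = A ∧ DP * CP = A' ∧
      ∃ (C : Matrix V V' ℕ) (D : Matrix V' V ℕ), A = C * D ∧ A' = D * C := by
  intro A V' E' s' t' A' CP DP
  have h1 : CP * DP = A := by
    ext I J
    simp only [Matrix.mul_apply, CP, DP, A, of_apply]
    rw [← Finset.univ_sigma_univ, Finset.sum_sigma]
    rw [Finset.sum_eq_single J]
    · simpa using card_split s t m q hq I J
    · intro K _ hK
      simp [hK]
    · simp
  have h2 : DP * CP = A' := by
    ext v w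
    rcases v with ⟨J, j⟩
    rcases w with ⟨K, k⟩
    simp only [Matrix.mul_apply, CP, DP, A', of_apply, ite_mul, one_mul, zero_mul]
    rw [Finset.sum_ite_eq, if_pos (Finset.mem_univ J)]
    exact (card_split2 s t m q hq J K j k).symm
  exact ⟨h1, h2, CP, DP, h1.symm, h2.symm⟩
end
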